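/- arXiv:2603.23458 — 3 statements merged into one kernel-verified Lean document; each statement's English description precedes it below -/
import Mathlib

section
/- For any integers f ≥ 1 and a ≥ 2, with n = 5f+1 and h = 4f+1, if C coalition members produce a branches (quorums of size ≥ h) where honest players each join at most one branch and coalition members at most a branches, then the number x of coalition members appearing in at most one branch satisfies x ≤ ⌊(a·n − a·h − n + C)/(a−1)⌋. -/
/-!
Count quorum memberships. The `a` quorums have at least `a·h` memberships in total. An honest
player contributes at most one, a coalition member lying in at most one quorum at most one, and
any other coalition member at most `a`, so `a·h ≤ (n − C) + x + a(C − x)`. Solving for `x`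
(using `C ≤ n` and `a ≥ 2`) gives `(a − 1)·x ≤ a·n − a·h − n + C`.
-/

open Finset

section MembershipCount

variable {ι α : Type*} [Fintype ι] [Fintype α] [DecidableEq α]

theorem sum_card_eq_sum_card_filter_mem (Q : ι → Finset α) :
    ∑ i, #(Q i) = ∑ v, #{i | v ∈ Q i} := by
  simpa [bipartiteAbove, bipartiteBelow] using
    sum_card_bipartiteAbove_eq_sum_card_bipartiteBelow (s := univ) (t := univ)
      (r := fun i v => v ∈ Q i)

theorem sum_card_filter_mem_le (Q : ι → Finset α) (s : Finset α)
    (hout : ∀ v ∉ s, #{i | v ∈ Q i} ≤ 1) :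
    ∑ v, #{i | v ∈ Q i} ≤
      #sᶜ + #{v ∈ s | #{i | v ∈ Q i} ≤ 1} + Fintype.card ι * #{v ∈ s | ¬#{i | v ∈ Q i} ≤ 1} := by
  set deg : α → ℕ := fun v => #{i | v ∈ Q i}
  have hcompl : ∑ v ∈ sᶜ, deg v ≤ #sᶜ := by
    simpa using sum_le_card_nsmul sᶜ deg 1 fun v hv => hout v (mem_compl.mp hv)
  have hlow : ∑ v ∈ s with deg v ≤ 1, deg v ≤ #{v ∈ s | deg v ≤ 1} := by
    simpa using sum_le_card_nsmul _ deg 1 fun v hv => (mem_filter.mp hv).2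
  have hhigh : ∑ v ∈ s with ¬deg v ≤ 1, deg v ≤ #{v ∈ s | ¬deg v ≤ 1} * Fintype.card ι := by
    simpa using sum_le_card_nsmul _ deg _ fun v _ => card_le_univ _
  rw [← sum_add_sum_compl s, ← sum_filter_add_sum_filter_not s (deg · ≤ 1)]
  linarith

end MembershipCount

theorem stmt6_general (f a : ℕ) (ha : 2 ≤ a)
    (α : Type) [Fintype α] [DecidableEq α]
    (hcard : Fintype.card α = 5 * f + 1)
    (co : Finset α) (C : ℕ) (hco : co.card = C)
    (Q : Fin a → Finset α) (hQ : ∀ i, 4 * f + 1 ≤ (Q i).card)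
    (honest : ∀ x, x ∉ co → (Finset.univ.filter fun i => x ∈ Q i).card ≤ 1) :
    ((co.filter fun c => (Finset.univ.filter fun i => c ∈ Q i).card ≤ 1).card : ℤ)
      ≤ ⌊((a * (5 * f + 1) - a * (4 * f + 1) - (5 * f + 1) + C : ℚ)) / (a - 1)⌋ := by
  set x := #{v ∈ co | #{i | v ∈ Q i} ≤ 1}
  set y := #{v ∈ co | ¬#{i | v ∈ Q i} ≤ 1}
  have hsplit : x + y = C := hco ▸ card_filter_add_card_filter_not _
  have hcompl : #coᶜ + C = 5 * f + 1 := by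
    rw [← hcard, ← hco, add_comm, card_add_card_compl]
  have hcount : a * (4 * f + 1) ≤ #coᶜ + x + a * y := by
    calc a * (4 * f + 1) ≤ ∑ i, #(Q i) := by
          simpa using card_nsmul_le_sum univ (fun i => #(Q i)) _ fun i _ => hQ i
      _ ≤ #coᶜ + x + a * y := by
          rw [sum_card_eq_sum_card_filter_mem]
          simpa only [Fintype.card_fin] using sum_card_filter_mem_le Q co honest
  have ha' : (2 : ℚ) ≤ a := by exact_mod_cast ha
  have hint : ((a : ℚ) - 1) * x ≤ a * (5 * f + 1) - a * (4 * f + 1) - (5 * f + 1) + C := by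
    have hcount' : (a : ℚ) * (4 * f + 1) ≤ #coᶜ + x + a * y := by exact_mod_cast hcount
    have hsplit' : (x : ℚ) + y = C := by exact_mod_cast hsplit
    have hcompl' : (#coᶜ : ℚ) + C = 5 * f + 1 := by exact_mod_cast hcompl
    -- the slack is `(a - 2) · (n - C) ≥ 0`
    nlinarith [mul_nonneg (sub_nonneg.mpr ha') (Nat.cast_nonneg (α := ℚ) #coᶜ)]
  rw [Int.le_floor, le_div_iff₀ (by linarith)]
  push_cast
  linarith

/-- General covering bound: with n = 5f+1, h = 4f+1, a ≥ 2 branches of size ≥ h,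
honest players in at most one branch and coalition members in at most a, the
number x of coalition members appearing in at most one branch satisfies
x ≤ ⌊(a·n − a·h − n + C)/(a−1)⌋. -/
theorem stmt6 (f a : ℕ) (hf : 1 ≤ f) (ha : 2 ≤ a)
    (α : Type) [Fintype α] [DecidableEq α]
    (hcard : Fintype.card α = 5 * f + 1)
    (co : Finset α) (C : ℕ) (hco : co.card = C)
    (Q : Fin a → Finset α) (hQ : ∀ i, 4 * f + 1 ≤ (Q i).card)
    (honest : ∀ x, x ∉ co → (Finset.univ.filter fun i => x ∈ Q i).card ≤ 1)
    (coal : ∀ x, x ∈ co → (Finset.univ.filter fun i => x ∈ Q i).card ≤ a) :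
    ((co.filter fun c => (Finset.univ.filter fun i => c ∈ Q i).card ≤ 1).card : ℤ)
      ≤ ⌊((a * (5 * f + 1) - a * (4 * f + 1) - (5 * f + 1) + C : ℚ)) / (a - 1)⌋ :=
  stmt6_general f a ha α hcard co C hco Q hQ honest
end

section
/- For all f ≥ 1, the triple-spend window is nonempty under the winner-consensus constraint in the sense that ⌈(7f+2)/2⌉ ≤ ⌊(11f+2)/3⌋ holds for all f ≥ 4, and the quadruple-spend threshold exceeds the winner-consensus limit: ⌈(11f+3)/3⌉ > ⌊(11f+2)/3⌋ for all f ≥ 1. -/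
/-!
Both thresholds are integer divisions of integers: writing `c = ⌈(7f+2)/2⌉` and
`w = ⌊(11f+2)/3⌋`, one has `2c ≤ 7f + 3` and `3w ≥ 11f`, so `6(c - w) ≤ 9 - f < 6` once
`f ≥ 4`. The second claim needs no arithmetic at all: `⌊y⌋ ≤ y < x ≤ ⌈x⌉` for `y < x`.
-/

/-- The triple-spend window is nonempty for f ≥ 4: ⌈(7f+2)/2⌉ ≤ ⌊(11f+2)/3⌋;
and the quadruple-spend threshold exceeds the winner-consensus limit for all
f ≥ 1: ⌈(11f+3)/3⌉ > ⌊(11f+2)/3⌋. -/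
theorem stmt8 :
    (∀ f : ℕ, 4 ≤ f → ⌈((7 * f + 2 : ℚ)) / 2⌉ ≤ ⌊((11 * f + 2 : ℚ)) / 3⌋) ∧
    (∀ f : ℕ, 1 ≤ f → ⌈((11 * f + 3 : ℚ)) / 3⌉ > ⌊((11 * f + 2 : ℚ)) / 3⌋) := by
  refine ⟨fun f hf => ?_, fun f _ => Int.floor_lt_ceil_of_lt (by linarith)⟩
  have triple : (7 * f + 2 : ℚ) / 2 = ((7 * f + 2 : ℤ) : ℚ) / (2 : ℕ) := by push_cast; ring
  have winner : (11 * f + 2 : ℚ) / 3 = ((11 * f + 2 : ℤ) : ℚ) / (3 : ℕ) := by push_cast; ring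
  rw [triple, winner, Rat.ceil_intCast_div_natCast, Rat.floor_intCast_div_natCast]
  omega
end

section
/- (Retroactive 3f+1 extension) In the 3f+1 model with t0 = f and quorum h = 2f+1: any two quorums of size 2f+1 out of n = 3f+1 intersect in at least f+1 players; after excluding f+1 detected equivocators, the residual instance has n' = 2f players, and residual safety C − (f+1) < 2f/3 is equivalent to C ≤ ⌊(5f+2)/3⌋; moreover ⌊(5f+2)/3⌋/(3f+1) → 5/9 as f → ∞. -/
open Filter

lemma lim_frac (a b c d : ℝ) (hc : c ≠ 0) :
    Tendsto (fun f : ℕ => (a * f + b) / (c * f + d)) atTop (nhds (a / c)) := by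
  have h1 : Tendsto (fun f : ℕ => (1 : ℝ) / f) atTop (nhds 0) :=
    tendsto_one_div_atTop_nhds_zero_nat
  have h2 : Tendsto (fun f : ℕ => (a + b * (1 / f)) / (c + d * (1 / f))) atTop
      (nhds ((a + b * 0) / (c + d * 0))) :=
    (tendsto_const_nhds.add (h1.const_mul b)).div
      (tendsto_const_nhds.add (h1.const_mul d)) (by simpa using hc)
  simp only [mul_zero, add_zero] at h2
  refine h2.congr' ?_
  filter_upwards [eventually_ge_atTop 1] with f hf
  have hf0 : (f : ℝ) ≠ 0 := by positivity
  have e1 : a + b * (1 / f) = (a * f + b) / f := by field_simp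
  have e2 : c + d * (1 / f) = (c * f + d) / f := by field_simp
  rw [e1, e2, div_div_div_cancel_right₀]
  exact hf0

/-- Retroactive 3f+1 extension: quorums of size 2f+1 out of n = 3f+1 intersect
in ≥ f+1 players; after excluding f+1 equivocators, n' = 2f remain, and
residual safety C − (f+1) < 2f/3 is equivalent to C ≤ ⌊(5f+2)/3⌋; moreover
⌊(5f+2)/3⌋/(3f+1) → 5/9. -/
theorem stmt16 :
    (∀ (f : ℕ) (α : Type) [Fintype α] [DecidableEq α],
      Fintype.card α = 3 * f + 1 →
      ∀ A B : Finset α, 2 * f + 1 ≤ A.card → 2 * f + 1 ≤ B.card →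
        f + 1 ≤ (A ∩ B).card) ∧
    (∀ f : ℕ, (3 * f + 1) - (f + 1) = 2 * f) ∧
    (∀ f C : ℕ, 1 ≤ f → f + 1 ≤ C →
      (((C : ℚ) - (f + 1) < 2 * f / 3) ↔ C ≤ (5 * f + 2) / 3)) ∧
    Tendsto (fun f : ℕ => (((5 * f + 2) / 3 : ℕ) : ℝ) / (3 * f + 1))
      atTop (nhds (5 / 9)) := by
  refine ⟨?_, fun f => by omega, ?_, ?_⟩
  · intro f α _ _ hcard A B hA hB
    have h1 := Finset.card_union_add_card_inter A B
    have h2 : (A ∪ B).card ≤ 3 * f + 1 := hcard ▸ Finset.card_le_univ _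
    omega
  · intro f C hf hC
    rw [Nat.le_div_iff_mul_le (by norm_num)]
    constructor
    · intro h
      have hCq : ((f : ℚ) + 1) ≤ C := by exact_mod_cast hC
      have h3 : (C : ℚ) * 3 < 5 * f + 3 := by linarith
      have h4 : C * 3 < 5 * f + 3 := by exact_mod_cast h3
      omega
    · intro h
      have : (C : ℚ) * 3 ≤ 5 * f + 2 := by exact_mod_cast h
      linarith
  · have hg := lim_frac (5 / 3) 0 3 1 (by norm_num)
    have hh := lim_frac (5 / 3) (2 / 3) 3 1 (by norm_num)
    rw [show (5 / 3 : ℝ) / 3 = 5 / 9 by norm_num] at hg hh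
    refine tendsto_of_tendsto_of_tendsto_of_le_of_le hg hh ?_ ?_
    · intro f
      have hpos : (0 : ℝ) < 3 * (f : ℝ) + 1 := by positivity
      show (5 / 3 * (f : ℝ) + 0) / (3 * f + 1) ≤ ((5 * f + 2) / 3 : ℕ) / (3 * f + 1)
      gcongr
      have h3 : 5 * f ≤ 3 * ((5 * f + 2) / 3) := by omega
      have : (5 : ℝ) * f ≤ 3 * ((5 * f + 2) / 3 : ℕ) := by exact_mod_cast h3
      linarith
    · intro f
      have hpos : (0 : ℝ) < 3 * (f : ℝ) + 1 := by positivity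
      show ((5 * f + 2) / 3 : ℕ) / (3 * (f : ℝ) + 1) ≤ (5 / 3 * f + 2 / 3) / (3 * f + 1)
      gcongr
      have h3 : 3 * ((5 * f + 2) / 3) ≤ 5 * f + 2 := by omega
      have : (3 : ℝ) * ((5 * f + 2) / 3 : ℕ) ≤ 5 * f + 2 := by exact_mod_cast h3
      linarith
end
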